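/- arXiv:1502.02301 — 4 statements merged into one kernel-verified Lean document; each statement's English description precedes it below -/
import Mathlib

section
/- The Chalker–Coddington operator U(φ) = D·T(φ) on ℓ²(ℤ²), where T(φ) = cos(φ)·S_↺ + i·sin(φ)·S_↻, is unitarily equivalent (via the explicit identification I of ℓ²(ℤ²) with ℂ⁴⊗ℓ²(ℤ²) relabeling each 2×2 plaquette) to the operator Ũ(φ) = D̃·(cos(φ)·R⊗1 + i·sin(φ)·(R^{−1}⊗1)·S) on ℂ⁴⊗ℓ²(ℤ²), where D̃ = I D I^{−1}. -/
open Complex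

noncomputable section

/-- `ℓ²(ℤ²)`. -/
abbrev K2 := lp (fun _ : ℤ × ℤ => ℂ) 2
/-- `ℂ⁴ ⊗ ℓ²(ℤ²)`; the coin index `{±1,±2}` is encoded as `Fin 2 × Bool`
(`(0, s)` is `±1`, `(1, s)` is `±2`, with `s = true` meaning `+`). -/
abbrev H4 := lp (fun _ : (Fin 2 × Bool) × (ℤ × ℤ) => ℂ) 2

def δ2 (m : ℤ × ℤ) : K2 := lp.single 2 m 1
def e4 (τ : Fin 2 × Bool) (j : ℤ × ℤ) : H4 := lp.single 2 (τ, j) 1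

/-- The counterclockwise plaquette permutation of `ℤ²`. -/
def sigl (m : ℤ × ℤ) : ℤ × ℤ :=
  if Even m.1 then (if Even m.2 then (m.1 + 1, m.2) else (m.1, m.2 - 1))
  else (if Even m.2 then (m.1, m.2 + 1) else (m.1 - 1, m.2))

/-- The clockwise plaquette permutation of `ℤ²`. -/
def sigr (m : ℤ × ℤ) : ℤ × ℤ :=
  if Even m.1 then (if Even m.2 then (m.1, m.2 - 1) else (m.1 - 1, m.2))
  else (if Even m.2 then (m.1 + 1, m.2) else (m.1, m.2 + 1))

/-- The coin map `R : |±1⟩ ↦ |±2⟩, |±2⟩ ↦ |∓1⟩`. -/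
def rho (τ : Fin 2 × Bool) : Fin 2 × Bool := if τ.1 = 0 then (1, τ.2) else (0, !τ.2)

/-- The coin map `R⁻¹`. -/
def rhoInv (τ : Fin 2 × Bool) : Fin 2 × Bool := if τ.1 = 1 then (0, τ.2) else (1, !τ.2)

/-- The step `ĵ + τ̂` with `±̂1 = (±1,0)`, `±̂2 = (0,±1)`. -/
def step4 (τ : Fin 2 × Bool) (m : ℤ × ℤ) : ℤ × ℤ :=
  if τ.1 = 0 then (m.1 + (if τ.2 then 1 else -1), m.2)
  else (m.1, m.2 + (if τ.2 then 1 else -1))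

/-!
Every site `m` of `ℤ²` is a corner `τ` of the plaquette `j = ⌊m / 2⌋`, and `I` sends `δ_m` to
`e_{τ, j}`. In these labels the counterclockwise rotation `σ_↺` only turns the corner, `τ ↦ Rτ`,
while the clockwise rotation `σ_↻` moves to the neighbouring plaquette in direction `τ` and then
turns the corner by `R⁻¹`. Hence `I T(φ) I⁻¹ = cos φ · R⊗1 + i sin φ · (R⁻¹⊗1) S` on basis
vectors, so everywhere by continuity, and `D` is left untouched.
-/

open scoped ENNReal

theorem lp.ext_single_one {𝕜 ι F : Type*} [DecidableEq ι] [NormedRing 𝕜] [AddCommMonoid F]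
    [Module 𝕜 F] [TopologicalSpace F] [T2Space F] [ContinuousSMul 𝕜 F] {p : ℝ≥0∞} [Fact (1 ≤ p)]
    (hp : p ≠ ⊤)
    {f g : lp (fun _ : ι => 𝕜) p →L[𝕜] F}
    (h : ∀ i, f (lp.single p i 1) = g (lp.single p i 1)) : f = g :=
  lp.ext_continuousLinearMap hp fun i => ContinuousLinearMap.ext_ring (h i)

def plaquetteLabel (m : ℤ × ℤ) : (Fin 2 × Bool) × (ℤ × ℤ) :=
  (if Even m.1 then (if Even m.2 then (1, false) else (0, false))
    else (if Even m.2 then (0, true) else (1, true)), (m.1 / 2, m.2 / 2))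

theorem plaquetteLabel_sigl (m : ℤ × ℤ) :
    plaquetteLabel (sigl m) = (rho (plaquetteLabel m).1, (plaquetteLabel m).2) := by
  obtain ⟨m1, m2⟩ := m
  simp only [plaquetteLabel, sigl, rho, Int.even_iff]
  split_ifs <;> simp_all <;> omega

theorem plaquetteLabel_sigr (m : ℤ × ℤ) :
    plaquetteLabel (sigr m) =
      (rhoInv (plaquetteLabel m).1, step4 (plaquetteLabel m).1 (plaquetteLabel m).2) := by
  obtain ⟨m1, m2⟩ := m
  simp only [plaquetteLabel, sigr, rhoInv, step4, Int.even_iff]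
  split_ifs <;> simp_all <;> omega

theorem δ2_eq_e4_plaquetteLabel {F : Type*} (I : K2 → F) (e : (Fin 2 × Bool) → ℤ × ℤ → F)
    (hI : ∀ j : ℤ × ℤ,
      I (δ2 (2 * j.1, 2 * j.2)) = e (1, false) j ∧
      I (δ2 (2 * j.1 + 1, 2 * j.2)) = e (0, true) j ∧
      I (δ2 (2 * j.1 + 1, 2 * j.2 + 1)) = e (1, true) j ∧
      I (δ2 (2 * j.1, 2 * j.2 + 1)) = e (0, false) j)
    (m : ℤ × ℤ) : I (δ2 m) = e (plaquetteLabel m).1 (plaquetteLabel m).2 := by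
  have halves (k : ℤ) :
      (2 * k) % 2 = 0 ∧ (2 * k + 1) % 2 = 1 ∧ (2 * k) / 2 = k ∧ (2 * k + 1) / 2 = k := by
    omega
  obtain ⟨m1, m2⟩ := m
  obtain ⟨a, rfl | rfl⟩ := Int.even_or_odd' m1 <;>
    obtain ⟨b, rfl | rfl⟩ := Int.even_or_odd' m2 <;>
    simp [plaquetteLabel, Int.odd_iff, halves, hI (a, b)]

theorem chalker_coddington_is_generalized_qw_general
    (φ : ℝ)
    (D : K2 →L[ℂ] K2)
    (Sl : K2 →L[ℂ] K2) (hSl : ∀ m, Sl (δ2 m) = δ2 (sigl m))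
    (Sr : K2 →L[ℂ] K2) (hSr : ∀ m, Sr (δ2 m) = δ2 (sigr m))
    (U : K2 →L[ℂ] K2)
    (hU : U = D.comp ((Real.cos φ : ℂ) • Sl + (Complex.I * Real.sin φ) • Sr))
    (Iop : K2 ≃ₗᵢ[ℂ] H4)
    (hI : ∀ j : ℤ × ℤ,
      Iop (δ2 (2 * j.1, 2 * j.2)) = e4 (1, false) j ∧
      Iop (δ2 (2 * j.1 + 1, 2 * j.2)) = e4 (0, true) j ∧
      Iop (δ2 (2 * j.1 + 1, 2 * j.2 + 1)) = e4 (1, true) j ∧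
      Iop (δ2 (2 * j.1, 2 * j.2 + 1)) = e4 (0, false) j)
    (RI : H4 →L[ℂ] H4) (hRI : ∀ τ j, RI (e4 τ j) = e4 (rho τ) j)
    (RIinv : H4 →L[ℂ] H4) (hRIinv : ∀ τ j, RIinv (e4 τ j) = e4 (rhoInv τ) j)
    (S : H4 →L[ℂ] H4) (hS : ∀ τ j, S (e4 τ j) = e4 τ (step4 τ j)) :
    ∀ x : H4,
      Iop (U (Iop.symm x)) =
      Iop (D (Iop.symm
        ((Real.cos φ : ℂ) • RI x + (Complex.I * Real.sin φ) • RIinv (S x)))) := by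
  intro x
  set c : ℂ := (Real.cos φ : ℂ)
  set s : ℂ := Complex.I * Real.sin φ
  let J : K2 →L[ℂ] H4 := Iop.toContinuousLinearEquiv
  have hJ (f : K2) : J f = Iop f := rfl
  have hIδ := δ2_eq_e4_plaquetteLabel Iop e4 hI
  have intertwine : J.comp (c • Sl + s • Sr) = (c • RI + s • RIinv.comp S).comp J := by
    refine lp.ext_single_one (by norm_num) fun m => ?_
    simp only [ContinuousLinearMap.comp_apply, add_apply, smul_apply, map_add, map_smul, hJ,
      ← δ2.eq_1]
    rw [hSl, hSr, hIδ, hIδ, hIδ, plaquetteLabel_sigl, plaquetteLabel_sigr, hRI, hS, hRIinv]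
  have hT : (c • Sl + s • Sr) (Iop.symm x) = Iop.symm (c • RI x + s • RIinv (S x)) := by
    rw [Iop.eq_symm_apply]
    simpa [hJ] using congr($intertwine (Iop.symm x))
  rw [hU, ContinuousLinearMap.comp_apply, hT]

/-- The Chalker–Coddington operator `U(φ) = D·T(φ)` on `ℓ²(ℤ²)` is unitarily
equivalent, via the plaquette relabeling `I`, to
`Ũ(φ) = D̃ (cos φ · R⊗1 + i sin φ · (R⁻¹⊗1) S)` on `ℂ⁴ ⊗ ℓ²(ℤ²)`. -/
theorem chalker_coddington_is_generalized_qw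
    (φ : ℝ) (hφ : φ ∈ Set.Icc 0 (Real.pi / 2))
    (dcoef : ℤ × ℤ → ℂ) (hdcoef : ∀ m, ‖dcoef m‖ = 1)
    (D : K2 →L[ℂ] K2) (hD : ∀ m, D (δ2 m) = dcoef m • δ2 m)
    (Sl : K2 →L[ℂ] K2) (hSl : ∀ m, Sl (δ2 m) = δ2 (sigl m))
    (Sr : K2 →L[ℂ] K2) (hSr : ∀ m, Sr (δ2 m) = δ2 (sigr m))
    (U : K2 →L[ℂ] K2)
    (hU : U = D.comp ((Real.cos φ : ℂ) • Sl + (Complex.I * Real.sin φ) • Sr))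
    (Iop : K2 ≃ₗᵢ[ℂ] H4)
    (hI : ∀ j : ℤ × ℤ,
      Iop (δ2 (2 * j.1, 2 * j.2)) = e4 (1, false) j ∧
      Iop (δ2 (2 * j.1 + 1, 2 * j.2)) = e4 (0, true) j ∧
      Iop (δ2 (2 * j.1 + 1, 2 * j.2 + 1)) = e4 (1, true) j ∧
      Iop (δ2 (2 * j.1, 2 * j.2 + 1)) = e4 (0, false) j)
    (RI : H4 →L[ℂ] H4) (hRI : ∀ τ j, RI (e4 τ j) = e4 (rho τ) j)
    (RIinv : H4 →L[ℂ] H4) (hRIinv : ∀ τ j, RIinv (e4 τ j) = e4 (rhoInv τ) j)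
    (S : H4 →L[ℂ] H4) (hS : ∀ τ j, S (e4 τ j) = e4 τ (step4 τ j)) :
    ∀ x : H4,
      Iop (U (Iop.symm x)) =
      Iop (D (Iop.symm
        ((Real.cos φ : ℂ) • RI x + (Complex.I * Real.sin φ) • RIinv (S x)))) :=
  chalker_coddington_is_generalized_qw_general φ D Sl hSl Sr hSr U hU Iop hI RI hRI RIinv hRIinv S
    hS
end
end

section
/- For each (x₁,x₂) ∈ 𝕋² and φ ∈ [0,π/2], the 4×4 matrix M(x₁,x₂) with rows (0, i sinφ e^{ix₂}, 0, cosφ), (cosφ, 0, i sinφ e^{−ix₁}, 0), (0, cosφ, 0, i sinφ e^{−ix₂}), (i sinφ e^{ix₁}, 0, cosφ, 0) is unitary, and its eigenvalues are the four square roots ±√(μ₊), ±√(μ₋) of μ_± = i·p ± √(1−p²), where p = sin(2φ)·(cos x₁ + cos x₂)/2. -/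
/-!
Writing `a = i sin φ e^{ix₂}`, `b = i sin φ e^{-ix₁}` and `c = cos φ`, the matrix is
`[[0, a, 0, c], [c, 0, b, 0], [0, c, 0, -ā], [-b̄, 0, c, 0]]`. Its rows are orthonormal because
`|a|² + c² = |b|² + c² = 1`, and the entries `-ā`, `-b̄` make the two pairs of rows with overlapping
support orthogonal. The matrix maps even to odd coordinates and back, so its characteristic
polynomial is even: it equals `z⁴ - 2ipz² - 1` with `p = c (Im a + Im b)`. As a quadratic in `z²`
this has roots `ip ± √(1 - p²)`, real square root since `|p| ≤ 1`.
-/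

open Complex

noncomputable section

/-- The Fourier symbol of the translation invariant part of the Chalker–Coddington
model. -/
def Mcc (φ x₁ x₂ : ℝ) : Matrix (Fin 4) (Fin 4) ℂ :=
  !![0, Complex.I * Real.sin φ * Complex.exp (Complex.I * x₂), 0, (Real.cos φ : ℂ);
     (Real.cos φ : ℂ), 0, Complex.I * Real.sin φ * Complex.exp (-Complex.I * x₁), 0;
     0, (Real.cos φ : ℂ), 0, Complex.I * Real.sin φ * Complex.exp (-Complex.I * x₂);
     Complex.I * Real.sin φ * Complex.exp (Complex.I * x₁), 0, (Real.cos φ : ℂ), 0]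

open ComplexConjugate Matrix

theorem Matrix.mem_spectrum_iff_det_scalar_sub_eq_zero {n K : Type*} [Fintype n] [DecidableEq n]
    [Field K] (A : Matrix n n K) (z : K) : z ∈ spectrum K A ↔ (scalar n z - A).det = 0 := by
  rw [mem_spectrum_iff_isRoot_charpoly, Polynomial.IsRoot.def, eval_charpoly]

theorem det_scalar_sub_bipartite_fin_four {R : Type*} [CommRing R] (a b c d e z : R) :
    (scalar (Fin 4) z - !![0, a, 0, c; c, 0, b, 0; 0, c, 0, d; e, 0, c, 0]).det =
      z ^ 4 - c * (a + b + d + e) * z ^ 2 + c ^ 2 * (a * d + b * e) - a * b * d * e - c ^ 4 := by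
  rw [det_succ_row_zero, Fin.sum_univ_four]
  simp [det_fin_three, Fin.succAbove, submatrix, Fin.lt_def]
  ring

theorem biquadratic_eq_zero_iff {p : ℝ} (hp : p ^ 2 ≤ 1) (z : ℂ) :
    z ^ 4 - 2 * I * p * z ^ 2 - 1 = 0 ↔
      z ^ 2 = I * p + (√(1 - p ^ 2) : ℝ) ∨ z ^ 2 = I * p - (√(1 - p ^ 2) : ℝ) := by
  have hr : ((√(1 - p ^ 2) : ℝ) : ℂ) ^ 2 = 1 - p ^ 2 := by
    exact_mod_cast Real.sq_sqrt (sub_nonneg.mpr hp)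
  rw [← sub_eq_zero (a := z ^ 2), ← sub_eq_zero (a := z ^ 2), ← mul_eq_zero]
  constructor <;> intro h
  · linear_combination h + (p : ℂ) ^ 2 * I_sq - hr
  · linear_combination h - (p : ℂ) ^ 2 * I_sq + hr

def chalkerCoddingtonForm (a b : ℂ) (c : ℝ) : Matrix (Fin 4) (Fin 4) ℂ :=
  !![0, a, 0, c; c, 0, b, 0; 0, c, 0, -conj a; -conj b, 0, c, 0]

section ChalkerCoddingtonForm

variable {a b : ℂ} {c : ℝ}

lemma mul_conj_add_sq_eq_one (ha : normSq a + c ^ 2 = 1) : a * conj a + c ^ 2 = 1 := by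
  rw [mul_conj]; exact_mod_cast ha

theorem chalkerCoddingtonForm_mem_unitaryGroup (ha : normSq a + c ^ 2 = 1)
    (hb : normSq b + c ^ 2 = 1) :
    chalkerCoddingtonForm a b c ∈ unitaryGroup (Fin 4) ℂ := by
  have ha' := mul_conj_add_sq_eq_one ha
  have hb' := mul_conj_add_sq_eq_one hb
  rw [mem_unitaryGroup_iff]
  ext i j
  fin_cases i <;> fin_cases j <;>
    simp [chalkerCoddingtonForm, mul_apply, Fin.sum_univ_four, one_apply]
  all_goals first | linear_combination ha' | linear_combination hb' | ring

theorem det_scalar_sub_chalkerCoddingtonForm (ha : normSq a + c ^ 2 = 1)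
    (hb : normSq b + c ^ 2 = 1) (z : ℂ) :
    (scalar (Fin 4) z - chalkerCoddingtonForm a b c).det =
      z ^ 4 - 2 * I * ((c * (a.im + b.im) : ℝ) : ℂ) * z ^ 2 - 1 := by
  have ha' := mul_conj_add_sq_eq_one ha
  have hb' := mul_conj_add_sq_eq_one hb
  rw [chalkerCoddingtonForm, det_scalar_sub_bipartite_fin_four]
  have hsa := sub_conj a
  have hsb := sub_conj b
  push_cast at hsa hsb ⊢
  linear_combination (-(c : ℂ) * z ^ 2) * (hsa + hsb) - ha' - (c ^ 2 + a * conj a) * hb'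

end ChalkerCoddingtonForm

lemma neg_conj_I_mul_exp (s : ℝ) (z : ℂ) : -conj (I * s * exp z) = I * s * exp (conj z) := by
  rw [map_mul, map_mul, conj_I, conj_ofReal, ← Complex.exp_conj]
  ring

lemma normSq_I_mul_exp (s x : ℝ) : normSq (I * s * exp (I * x)) = s ^ 2 := by
  simp [mul_comm I (x : ℂ), normSq_eq_norm_sq]

lemma im_I_mul_exp (s x : ℝ) : (I * s * exp (I * x)).im = s * Real.cos x := by
  rw [mul_comm I (x : ℂ), exp_mul_I]
  simp [← ofReal_cos, ← ofReal_sin]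

theorem Mcc_eq_chalkerCoddingtonForm (φ x₁ x₂ : ℝ) :
    Mcc φ x₁ x₂ = chalkerCoddingtonForm (I * Real.sin φ * exp (I * x₂))
      (I * Real.sin φ * exp (I * ↑(-x₁))) (Real.cos φ) := by
  rw [Mcc, chalkerCoddingtonForm, neg_conj_I_mul_exp, neg_conj_I_mul_exp]
  simp only [map_mul, map_neg, conj_I, conj_ofReal, ofReal_neg, neg_mul, mul_neg, neg_neg]

lemma sq_sin_two_mul_mul_cos_add_cos_div_two_le_one (φ x₁ x₂ : ℝ) :
    (Real.sin (2 * φ) * (Real.cos x₁ + Real.cos x₂) / 2) ^ 2 ≤ 1 := by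
  rw [sq_le_one_iff_abs_le_one, abs_div, abs_mul, abs_two, div_le_one two_pos]
  calc |Real.sin (2 * φ)| * |Real.cos x₁ + Real.cos x₂| ≤ 1 * 2 := by
        gcongr
        · exact Real.abs_sin_le_one _
        · linarith [abs_add_le (Real.cos x₁) (Real.cos x₂), Real.abs_cos_le_one x₁,
            Real.abs_cos_le_one x₂]
    _ = 2 := one_mul 2

theorem Mcc_unitary_and_eigenvalues_general (φ x₁ x₂ : ℝ) :
    Mcc φ x₁ x₂ ∈ Matrix.unitaryGroup (Fin 4) ℂ ∧
    (let p : ℝ := Real.sin (2 * φ) * (Real.cos x₁ + Real.cos x₂) / 2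
     spectrum ℂ (Mcc φ x₁ x₂) =
      {z : ℂ | z ^ 2 = Complex.I * p + (Real.sqrt (1 - p ^ 2) : ℂ) ∨
               z ^ 2 = Complex.I * p - (Real.sqrt (1 - p ^ 2) : ℂ)}) := by
  have hs (x : ℝ) : normSq (I * Real.sin φ * exp (I * x)) + Real.cos φ ^ 2 = 1 := by
    rw [normSq_I_mul_exp, Real.sin_sq_add_cos_sq]
  rw [Mcc_eq_chalkerCoddingtonForm]
  refine ⟨chalkerCoddingtonForm_mem_unitaryGroup (hs _) (hs _), ?_⟩
  intro p
  have hp : Real.cos φ * ((I * Real.sin φ * exp (I * x₂)).im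
      + (I * Real.sin φ * exp (I * ↑(-x₁))).im) = p := by
    rw [im_I_mul_exp, im_I_mul_exp, Real.cos_neg]
    simp only [p, Real.sin_two_mul]
    ring
  ext z
  rw [Set.mem_ofPred_eq, mem_spectrum_iff_det_scalar_sub_eq_zero,
    det_scalar_sub_chalkerCoddingtonForm (hs _) (hs _), hp]
  exact biquadratic_eq_zero_iff (sq_sin_two_mul_mul_cos_add_cos_div_two_le_one φ x₁ x₂) z

/-- For `φ ∈ [0,π/2]` and `(x₁,x₂) ∈ 𝕋²`, the matrix `M(x₁,x₂)` is unitary and its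
eigenvalues are exactly the square roots of `μ_± = i p ± √(1-p²)`,
where `p = sin(2φ)(cos x₁ + cos x₂)/2`. -/
theorem Mcc_unitary_and_eigenvalues (φ x₁ x₂ : ℝ) (hφ : φ ∈ Set.Icc 0 (Real.pi / 2)) :
    Mcc φ x₁ x₂ ∈ Matrix.unitaryGroup (Fin 4) ℂ ∧
    (let p : ℝ := Real.sin (2 * φ) * (Real.cos x₁ + Real.cos x₂) / 2
     spectrum ℂ (Mcc φ x₁ x₂) =
      {z : ℂ | z ^ 2 = Complex.I * p + (Real.sqrt (1 - p ^ 2) : ℂ) ∨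
               z ^ 2 = Complex.I * p - (Real.sqrt (1 - p ^ 2) : ℂ)}) :=
  Mcc_unitary_and_eigenvalues_general φ x₁ x₂
end
end

section
/- Let M(x) = diag(e^{ix}, e^{−ix})·e^{−iη}[[α, −β̄],[β, ᾱ]] with |α|²+|β|²=1, α ≠ 0. Then for every x ∈ 𝕋 the eigenvalues of M(x) are λ_±(x) = e^{−iη}(p(x) ± i√(1−p(x)²)) where p(x) = |α| cos(x + arg α), and the union over x ∈ 𝕋 of the spectra of M(x) equals the two arcs B_± = { e^{−iη}(p ± i√(1−p²)) : p ∈ [−|α|, |α|] } of the unit circle. -/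
/-!
The symbol `M(x)` has determinant `e^{-2iη}` (the coin is unitary) and trace
`2 e^{-iη} p(x)`, where `p(x) = Re(e^{ix} α) = |α| cos(x + arg α)`. Hence its characteristic
polynomial is `μ² - 2 e^{-iη} p μ + e^{-2iη}`, whose roots are `e^{-iη}(p ± i√(1 - p²))`.
As `x` runs over `ℝ`, `p(x)` sweeps out exactly `[-|α|, |α|]`, which gives the two bands.
-/

open Complex

noncomputable section

/-- The Fourier symbol `M(x) = diag(e^{ix}, e^{-ix}) · e^{-iη} [[α, -β̄],[β, ᾱ]]`
of a homogeneous one-dimensional quantum walk. -/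
def M1 (α β : ℂ) (η : ℝ) (x : ℝ) : Matrix (Fin 2) (Fin 2) ℂ :=
  Matrix.diagonal ![Complex.exp (Complex.I * x), Complex.exp (-Complex.I * x)] *
    (Complex.exp (-Complex.I * η) • !![α, -(starRingEnd ℂ β); β, starRingEnd ℂ α])

open Set

theorem Matrix.spectrum_fin_two_eq_pair {K : Type*} [Field K] {A : Matrix (Fin 2) (Fin 2) K}
    {a b : K} (htr : A.trace = a + b) (hdet : A.det = a * b) : spectrum K A = {a, b} := by
  rw [Matrix.trace_fin_two] at htr
  rw [Matrix.det_fin_two] at hdet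
  ext μ
  have hchar : (algebraMap K _ μ - A).det = (μ - a) * (μ - b) := by
    rw [Matrix.det_fin_two]
    simp only [Matrix.sub_apply, Matrix.algebraMap_matrix_apply, Algebra.algebraMap_self,
      RingHom.id_apply, ↓reduceIte, zero_ne_one, one_ne_zero]
    linear_combination (-μ) * htr + hdet
  rw [spectrum.mem_iff, Matrix.isUnit_iff_isUnit_det, isUnit_iff_ne_zero, not_ne_iff, hchar,
    mul_eq_zero, sub_eq_zero, sub_eq_zero, mem_insert_iff, mem_singleton_iff]

theorem Matrix.spectrum_fin_two_of_trace_of_det {A : Matrix (Fin 2) (Fin 2) ℂ} {e : ℂ} {p : ℝ}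
    (htr : A.trace = e * (2 * p)) (hdet : A.det = e ^ 2) (hp : p ^ 2 ≤ 1) :
    spectrum ℂ A = {e * (p + I * √(1 - p ^ 2)), e * (p - I * √(1 - p ^ 2))} := by
  have hs : ((√(1 - p ^ 2) : ℝ) : ℂ) ^ 2 = 1 - p ^ 2 := by
    exact_mod_cast Real.sq_sqrt (sub_nonneg.mpr hp)
  refine Matrix.spectrum_fin_two_eq_pair ?_ ?_
  · rw [htr]; ring
  · rw [hdet]; linear_combination (e ^ 2 * I ^ 2) * hs + (e ^ 2 * (1 - p ^ 2)) * I_sq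

theorem Complex.re_exp_ofReal_mul_I_mul (x : ℝ) (z : ℂ) :
    (exp (x * I) * z).re = ‖z‖ * Real.cos (x + z.arg) := by
  conv_lhs => rw [← norm_mul_exp_arg_mul_I z, mul_left_comm, ← exp_add, ← add_mul, ← ofReal_add,
    re_ofReal_mul, exp_ofReal_mul_I_re]

theorem Real.range_mul_cos_add {r : ℝ} (hr : 0 ≤ r) (θ : ℝ) :
    range (fun x => r * Real.cos (x + θ)) = Icc (-r) r := by
  have hshift : range (fun x => Real.cos (x + θ)) = range Real.cos :=
    (add_right_surjective θ).range_comp Real.cos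
  rw [range_comp' (r * ·) (fun x => Real.cos (x + θ)), hshift, Real.range_cos,
    image_mul_left_Icc hr (by norm_num), mul_neg, mul_one]

theorem trace_M1 (α β : ℂ) (η x : ℝ) :
    (M1 α β η x).trace = exp (-I * η) * (2 * (‖α‖ * Real.cos (x + α.arg) : ℝ)) := by
  have hconj : exp (-I * x) * starRingEnd ℂ α = starRingEnd ℂ (exp (x * I) * α) := by
    rw [map_mul, ← exp_conj, map_mul, conj_ofReal, conj_I, mul_neg, mul_comm (x : ℂ), neg_mul]
  calc (M1 α β η x).trace
      = exp (-I * η) * (exp (I * x) * α + exp (-I * x) * starRingEnd ℂ α) := by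
        simp only [M1, Matrix.trace_fin_two, Matrix.diagonal_mul, Matrix.smul_apply, smul_eq_mul,
          Matrix.of_apply, Matrix.cons_val', Matrix.cons_val_zero, Matrix.cons_val_one,
          Matrix.empty_val', Matrix.cons_val_fin_one]
        ring
    _ = exp (-I * η) * (2 * (‖α‖ * Real.cos (x + α.arg) : ℝ)) := by
        rw [mul_comm I, hconj, add_conj, re_exp_ofReal_mul_I_mul, ofReal_mul, ofReal_ofNat]

theorem det_M1 {α β : ℂ} (h : ‖α‖ ^ 2 + ‖β‖ ^ 2 = 1) (η x : ℝ) :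
    (M1 α β η x).det = exp (-I * η) ^ 2 := by
  rw [M1, Matrix.det_mul, Matrix.det_diagonal, Matrix.det_smul, Matrix.det_fin_two_of,
    Fin.prod_univ_two]
  have hunit : α * starRingEnd ℂ α + starRingEnd ℂ β * β = 1 := by
    rw [mul_conj, mul_comm, mul_conj, ← ofReal_add, normSq_eq_norm_sq, normSq_eq_norm_sq, h,
      ofReal_one]
  simp only [Matrix.cons_val_zero, Matrix.cons_val_one, Fintype.card_fin, neg_mul,
    sub_neg_eq_add]
  rw [← exp_add, add_neg_cancel, exp_zero, hunit, one_mul, mul_one]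

theorem spectrum_M1 {α β : ℂ} (h : ‖α‖ ^ 2 + ‖β‖ ^ 2 = 1) (η x : ℝ) :
    spectrum ℂ (M1 α β η x) =
      {exp (-I * η) * (‖α‖ * Real.cos (x + α.arg) +
          I * Real.sqrt (1 - (‖α‖ * Real.cos (x + α.arg)) ^ 2)),
       exp (-I * η) * (‖α‖ * Real.cos (x + α.arg) -
          I * Real.sqrt (1 - (‖α‖ * Real.cos (x + α.arg)) ^ 2))} := by
  have hmem : ‖α‖ * Real.cos (x + α.arg) ∈ Icc (-‖α‖) ‖α‖ :=
    Real.range_mul_cos_add (norm_nonneg α) α.arg ▸ mem_range_self x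
  have hp : (‖α‖ * Real.cos (x + α.arg)) ^ 2 ≤ 1 := by
    nlinarith [hmem.1, hmem.2, sq_nonneg ‖β‖]
  simpa only [ofReal_mul] using
    Matrix.spectrum_fin_two_of_trace_of_det (trace_M1 α β η x) (det_M1 h η x) hp

theorem M1_spectrum_general (α β : ℂ) (η : ℝ)
    (h1 : ‖α‖ ^ 2 + ‖β‖ ^ 2 = 1) :
    (∀ x : ℝ,
      spectrum ℂ (M1 α β η x) =
        {Complex.exp (-Complex.I * η) *
            (‖α‖ * Real.cos (x + α.arg) +
              Complex.I * Real.sqrt (1 - (‖α‖ * Real.cos (x + α.arg)) ^ 2)),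
         Complex.exp (-Complex.I * η) *
            (‖α‖ * Real.cos (x + α.arg) -
              Complex.I * Real.sqrt (1 - (‖α‖ * Real.cos (x + α.arg)) ^ 2))}) ∧
    (⋃ x : ℝ, spectrum ℂ (M1 α β η x)) =
      {z : ℂ | ∃ p ∈ Set.Icc (-(‖α‖)) (‖α‖),
        z = Complex.exp (-Complex.I * η) *
              (p + Complex.I * Real.sqrt (1 - p ^ 2))} ∪
      {z : ℂ | ∃ p ∈ Set.Icc (-(‖α‖)) (‖α‖),
        z = Complex.exp (-Complex.I * η) *
              (p - Complex.I * Real.sqrt (1 - p ^ 2))} := by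
  refine ⟨spectrum_M1 h1 η, ?_⟩
  ext z
  simp only [mem_iUnion, spectrum_M1 h1, mem_insert_iff, mem_singleton_iff, mem_union,
    mem_ofPred_eq, ← Real.range_mul_cos_add (norm_nonneg α) α.arg, mem_range,
    exists_exists_eq_and, ofReal_mul, exists_or]

/-- For `α ≠ 0`, the eigenvalues of `M(x)` are `λ_±(x) = e^{-iη}(p(x) ± i√(1-p(x)²))`
with `p(x) = |α| cos(x + arg α)`, and the union of the spectra over `x ∈ 𝕋` is the two
bands `B_± = {e^{-iη}(p ± i√(1-p²)) : p ∈ [-|α|, |α|]}`. -/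
theorem M1_spectrum (α β : ℂ) (η : ℝ)
    (h1 : ‖α‖ ^ 2 + ‖β‖ ^ 2 = 1) (hα : α ≠ 0) :
    (∀ x : ℝ,
      spectrum ℂ (M1 α β η x) =
        {Complex.exp (-Complex.I * η) *
            (‖α‖ * Real.cos (x + α.arg) +
              Complex.I * Real.sqrt (1 - (‖α‖ * Real.cos (x + α.arg)) ^ 2)),
         Complex.exp (-Complex.I * η) *
            (‖α‖ * Real.cos (x + α.arg) -
              Complex.I * Real.sqrt (1 - (‖α‖ * Real.cos (x + α.arg)) ^ 2))}) ∧
    (⋃ x : ℝ, spectrum ℂ (M1 α β η x)) =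
      {z : ℂ | ∃ p ∈ Set.Icc (-(‖α‖)) (‖α‖),
        z = Complex.exp (-Complex.I * η) *
              (p + Complex.I * Real.sqrt (1 - p ^ 2))} ∪
      {z : ℂ | ∃ p ∈ Set.Icc (-(‖α‖)) (‖α‖),
        z = Complex.exp (-Complex.I * η) *
              (p - Complex.I * Real.sqrt (1 - p ^ 2))} :=
  M1_spectrum_general α β η h1
end
end

section
/- For the one-dimensional homogeneous quantum walk symbol M(x) = diag(e^{ix},e^{−ix})·e^{−iη}[[α,−β̄],[β,ᾱ]], the two eigenvalue branches λ_±(x) = e^{−iη}(p(x) ± i√(1−p(x)²)), p(x) = |α|cos(φ(x)), cross (λ₊(x) = λ₋(x)) if and only if |α| = 1 and |p(x)| = 1, and the derivative λ_±'(x) vanishes exactly at the critical points of p, i.e., where sin(φ(x)) = 0; consequently the set of quasi-energies at which crossings or critical points occur is exactly the set of four band edges τ_M = { e^{−iη}(±|α| ± i√(1−|α|²)) }. -/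
/-!
The lift condition gives `e^{iφ(x)} = e^{i(x + arg α)}`, so `λ_±(x) = e^{-iη} b_±(x + arg α)` with
`b_±(t) = a cos t ± i √(1 - a² cos² t)` and `a = |α| ≤ 1`. The branches cross iff the square root
vanishes, i.e. `a = 1` and `cos t = ±1`. Wherever `b_±` is differentiable, `Re b_±' = -a sin t`,
and it is differentiable wherever `sin t ≠ 0`. Where `sin t = 0` the imaginary part
`±√(1 - a² cos² t)` is extremal, so `b_±'` vanishes (or `b_±` is not differentiable there and
`deriv` is `0` by convention). Finally `sin t = 0` means `cos t = ±1`: the four band edges.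
-/

open Complex

noncomputable section

/-- Band functions `λ_±(x) = e^{-iη}(p(x) ± i√(1-p(x)²))`, `p(x) = |α| cos(φ(x))`. -/
def lamBand (α : ℂ) (η : ℝ) (φf : ℝ → ℝ) (s : Bool) (x : ℝ) : ℂ :=
  Complex.exp (-Complex.I * η) *
    (‖α‖ * Real.cos (φf x) +
      (if s then 1 else -1) * Complex.I *
        Real.sqrt (1 - (‖α‖ * Real.cos (φf x)) ^ 2))

lemma HasDerivAt.complex_re {g : ℝ → ℂ} {g' : ℂ} {t : ℝ} (h : HasDerivAt g g' t) :
    HasDerivAt (fun t => (g t).re) g'.re t :=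
  reCLM.hasFDerivAt.comp_hasDerivAt t h

lemma HasDerivAt.complex_im {g : ℝ → ℂ} {g' : ℂ} {t : ℝ} (h : HasDerivAt g g' t) :
    HasDerivAt (fun t => (g t).im) g'.im t :=
  imCLM.hasFDerivAt.comp_hasDerivAt t h

lemma Real.sqrt_one_sub_mul_sq_eq_zero_iff {a c : ℝ} (ha : 0 ≤ a) (ha1 : a ≤ 1)
    (hc : |c| ≤ 1) :
    √(1 - (a * c) ^ 2) = 0 ↔ a = 1 ∧ |a * c| = 1 := by
  have hac : |a * c| ≤ a := by
    rw [abs_mul, abs_of_nonneg ha]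
    exact mul_le_of_le_one_right ha hc
  rw [Real.sqrt_eq_zero', sub_nonpos, one_le_sq_iff_one_le_abs]
  constructor
  · intro h
    exact ⟨by linarith, by linarith⟩
  · rintro ⟨-, h⟩
    exact h.ge

lemma Real.isMinOn_sqrt_one_sub_mul_cos_sq (a : ℝ) {t : ℝ} (ht : Real.sin t = 0) :
    IsMinOn (fun t => √(1 - (a * Real.cos t) ^ 2)) Set.univ t := by
  have hcos : Real.cos t ^ 2 = 1 := by nlinarith [Real.sin_sq_add_cos_sq t]
  intro t' _
  refine Real.sqrt_le_sqrt ?_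
  rw [mul_pow, mul_pow, hcos]
  nlinarith [Real.cos_sq_le_one t', sq_nonneg a]

lemma Complex.cos_sin_eq_add_arg_of_exp_eq {α : ℂ} (hα : α ≠ 0) {φ x : ℝ}
    (h : exp (I * φ) = α / ‖α‖ * exp (I * x)) :
    Real.cos φ = Real.cos (x + arg α) ∧ Real.sin φ = Real.sin (x + arg α) := by
  have he : exp (φ * I) = exp ((x + arg α : ℝ) * I) := by
    have hn : (‖α‖ : ℂ) ≠ 0 := ofReal_ne_zero.2 (norm_ne_zero_iff.2 hα)
    rw [mul_comm, h, ofReal_add, add_mul, exp_add]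
    nth_rewrite 1 [← norm_mul_exp_arg_mul_I α]
    field_simp
  constructor
  · rw [← exp_ofReal_mul_I_re, he, exp_ofReal_mul_I_re]
  · rw [← exp_ofReal_mul_I_im, he, exp_ofReal_mul_I_im]

/-- `lamBand` without the phase `e^{-iη}`, as a function of the angle `t = φ(x)`. -/
def band (a : ℝ) (s : Bool) (t : ℝ) : ℂ :=
  a * Real.cos t + (if s then 1 else -1) * I * Real.sqrt (1 - (a * Real.cos t) ^ 2)

lemma lamBand_eq_exp_mul_band (α : ℂ) (η : ℝ) (φf : ℝ → ℝ) (s : Bool) (x : ℝ) :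
    lamBand α η φf s x = exp (-I * η) * band ‖α‖ s (φf x) := rfl

namespace band

variable {a : ℝ} {s : Bool} {t : ℝ}

lemma congr_cos {t' : ℝ} (h : Real.cos t = Real.cos t') : band a s t = band a s t' := by
  rw [band, band, h]

lemma true_eq_false_iff : band a true t = band a false t ↔ √(1 - (a * Real.cos t) ^ 2) = 0 := by
  simp [band, Complex.ext_iff, CharZero.eq_neg_self_iff]

lemma re_apply : (band a s t).re = a * Real.cos t := by
  cases s <;> simp [band, cos_ofReal_re]

lemma im_apply : (band a s t).im = (if s then 1 else -1) * √(1 - (a * Real.cos t) ^ 2) := by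
  cases s <;> simp [band, cos_ofReal_re]

lemma re_deriv (ht : DifferentiableAt ℝ (band a s) t) :
    (deriv (band a s) t).re = -(a * Real.sin t) := by
  have h := ht.hasDerivAt.complex_re
  simp only [re_apply] at h
  exact h.unique (((Real.hasDerivAt_cos t).const_mul a).congr_deriv (by ring))

lemma differentiableAt (ha_sq : a ^ 2 ≤ 1) (ht : Real.sin t ≠ 0) :
    DifferentiableAt ℝ (band a s) t := by
  have : (a * Real.cos t) ^ 2 < 1 := by
    have : 0 < Real.sin t ^ 2 := by positivity
    nlinarith [Real.sin_sq_add_cos_sq t, sq_nonneg (Real.cos t)]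
  unfold band
  fun_prop (disch := linarith)

lemma deriv_eq_zero_iff (ha : a ≠ 0) (ha_sq : a ^ 2 ≤ 1) :
    deriv (band a s) t = 0 ↔ Real.sin t = 0 := by
  constructor
  · intro h
    by_contra hsin
    have hre := re_deriv (s := s) (differentiableAt ha_sq hsin)
    rw [h, zero_re, eq_comm, neg_eq_zero] at hre
    exact hsin ((mul_eq_zero.1 hre).resolve_left ha)
  · intro hsin
    by_cases hd : DifferentiableAt ℝ (band a s) t
    · refine Complex.ext (by simp [re_deriv hd, hsin]) ?_
      have h := hd.hasDerivAt.complex_im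
      simp only [im_apply] at h
      rw [zero_im, ← h.deriv]
      have hmin := (Real.isMinOn_sqrt_one_sub_mul_cos_sq a hsin).isLocalMin Filter.univ_mem
      cases s
      · simpa using hmin.neg.deriv_eq_zero
      · simpa using hmin.deriv_eq_zero
    · exact deriv_zero_of_not_differentiableAt hd

lemma exists_sin_eq_zero_iff {z c : ℂ} :
    (∃ t, Real.sin t = 0 ∧ (z = c * band a true t ∨ z = c * band a false t)) ↔
      z = c * (a + I * √(1 - a ^ 2)) ∨ z = c * (a - I * √(1 - a ^ 2)) ∨
        z = c * (-a + I * √(1 - a ^ 2)) ∨ z = c * (-a - I * √(1 - a ^ 2)) := by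
  constructor
  · rintro ⟨t, ht, hz⟩
    rcases Real.sin_eq_zero_iff_cos_eq.1 ht with hc | hc <;> rcases hz with rfl | rfl <;>
      simp [band, hc, sub_eq_add_neg]
  · rintro (rfl | rfl | rfl | rfl)
    · exact ⟨0, Real.sin_zero, Or.inl (by simp [band])⟩
    · exact ⟨0, Real.sin_zero, Or.inr (by simp [band, sub_eq_add_neg])⟩
    · exact ⟨Real.pi, Real.sin_pi, Or.inl (by simp [band])⟩
    · exact ⟨Real.pi, Real.sin_pi, Or.inr (by simp [band, sub_eq_add_neg])⟩

end band

theorem qw_band_edges_general (α β : ℂ) (η : ℝ)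
    (h1 : ‖α‖ ^ 2 + ‖β‖ ^ 2 = 1) (hα : α ≠ 0)
    (φf : ℝ → ℝ)
    (hlift : ∀ x : ℝ, Complex.exp (Complex.I * φf x) =
      (α / ‖α‖) * Complex.exp (Complex.I * x)) :
    (∀ x : ℝ, lamBand α η φf true x = lamBand α η φf false x ↔
      (‖α‖ = 1 ∧ |‖α‖ * Real.cos (φf x)| = 1)) ∧
    (∀ x : ℝ,
      (deriv (lamBand α η φf true) x = 0 ↔ Real.sin (φf x) = 0) ∧
      (deriv (lamBand α η φf false) x = 0 ↔ Real.sin (φf x) = 0)) ∧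
    {z : ℂ | ∃ x : ℝ,
        (lamBand α η φf true x = lamBand α η φf false x ∨
          deriv (lamBand α η φf true) x = 0 ∨ deriv (lamBand α η φf false) x = 0) ∧
        (z = lamBand α η φf true x ∨ z = lamBand α η φf false x)} =
      {Complex.exp (-Complex.I * η) *
          (‖α‖ + Complex.I * Real.sqrt (1 - ‖α‖ ^ 2)),
       Complex.exp (-Complex.I * η) *
          (‖α‖ - Complex.I * Real.sqrt (1 - ‖α‖ ^ 2)),
       Complex.exp (-Complex.I * η) *
          (-(‖α‖) + Complex.I * Real.sqrt (1 - ‖α‖ ^ 2)),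
       Complex.exp (-Complex.I * η) *
          (-(‖α‖) - Complex.I * Real.sqrt (1 - ‖α‖ ^ 2))} := by
  have ha : ‖α‖ ≠ 0 := norm_ne_zero_iff.2 hα
  have ha_sq : ‖α‖ ^ 2 ≤ 1 := by nlinarith [sq_nonneg ‖β‖]
  have ha_le : ‖α‖ ≤ 1 := by nlinarith [norm_nonneg α]
  have hangle x := cos_sin_eq_add_arg_of_exp_eq hα (hlift x)
  have hlam s x : lamBand α η φf s x = exp (-I * η) * band ‖α‖ s (x + arg α) := by
    rw [lamBand_eq_exp_mul_band, band.congr_cos (hangle x).1]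
  have hcross x : lamBand α η φf true x = lamBand α η φf false x ↔
      ‖α‖ = 1 ∧ |‖α‖ * Real.cos (φf x)| = 1 := by
    rw [lamBand_eq_exp_mul_band, lamBand_eq_exp_mul_band, mul_right_inj' (exp_ne_zero _),
      band.true_eq_false_iff,
      Real.sqrt_one_sub_mul_sq_eq_zero_iff (norm_nonneg α) ha_le (Real.abs_cos_le_one _)]
  have hderiv s x : deriv (lamBand α η φf s) x = 0 ↔ Real.sin (φf x) = 0 := by
    simp only [funext (hlam s), deriv_const_mul_field', deriv_comp_add_const, mul_eq_zero,
      exp_ne_zero, false_or, band.deriv_eq_zero_iff ha ha_sq, (hangle x).2]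
  have hcrit x : (lamBand α η φf true x = lamBand α η φf false x ∨
      deriv (lamBand α η φf true) x = 0 ∨ deriv (lamBand α η φf false) x = 0) ↔
      Real.sin (φf x) = 0 := by
    rw [hderiv, hderiv, or_self, or_iff_right_of_imp]
    intro h
    obtain ⟨hnorm, hcos⟩ := (hcross x).1 h
    rw [hnorm, one_mul, abs_eq zero_le_one] at hcos
    exact Real.sin_eq_zero_iff_cos_eq.2 hcos
  refine ⟨hcross, fun x => ⟨hderiv true x, hderiv false x⟩, ?_⟩
  ext z
  simp only [Set.mem_ofPred_eq, Set.mem_insert_iff, Set.mem_singleton_iff, hcrit,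
    ← band.exists_sin_eq_zero_iff]
  constructor
  · rintro ⟨x, hx, hz⟩
    exact ⟨x + arg α, (hangle x).2 ▸ hx, by simpa only [hlam] using hz⟩
  · rintro ⟨t, ht, hz⟩
    refine ⟨t - arg α, ?_, by simpa only [hlam, sub_add_cancel] using hz⟩
    rwa [(hangle _).2, sub_add_cancel]

/-- For the homogeneous 1d quantum walk symbol: the eigenvalue branches cross iff
`|α| = 1` and `|p(x)| = 1`; their derivatives vanish exactly where `sin(φ(x)) = 0`;
and the quasi-energies where crossings or critical points occur form exactly the set
of four band edges `τ_M = {e^{-iη}(±|α| ± i√(1-|α|²))}`. -/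
theorem qw_band_edges (α β : ℂ) (η : ℝ)
    (h1 : ‖α‖ ^ 2 + ‖β‖ ^ 2 = 1) (hα : α ≠ 0)
    (φf : ℝ → ℝ) (hφf : ContDiff ℝ 1 φf)
    (hlift : ∀ x : ℝ, Complex.exp (Complex.I * φf x) =
      (α / ‖α‖) * Complex.exp (Complex.I * x)) :
    (∀ x : ℝ, lamBand α η φf true x = lamBand α η φf false x ↔
      (‖α‖ = 1 ∧ |‖α‖ * Real.cos (φf x)| = 1)) ∧
    (∀ x : ℝ,
      (deriv (lamBand α η φf true) x = 0 ↔ Real.sin (φf x) = 0) ∧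
      (deriv (lamBand α η φf false) x = 0 ↔ Real.sin (φf x) = 0)) ∧
    {z : ℂ | ∃ x : ℝ,
        (lamBand α η φf true x = lamBand α η φf false x ∨
          deriv (lamBand α η φf true) x = 0 ∨ deriv (lamBand α η φf false) x = 0) ∧
        (z = lamBand α η φf true x ∨ z = lamBand α η φf false x)} =
      {Complex.exp (-Complex.I * η) *
          (‖α‖ + Complex.I * Real.sqrt (1 - ‖α‖ ^ 2)),
       Complex.exp (-Complex.I * η) *
          (‖α‖ - Complex.I * Real.sqrt (1 - ‖α‖ ^ 2)),
       Complex.exp (-Complex.I * η) *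
          (-(‖α‖) + Complex.I * Real.sqrt (1 - ‖α‖ ^ 2)),
       Complex.exp (-Complex.I * η) *
          (-(‖α‖) - Complex.I * Real.sqrt (1 - ‖α‖ ^ 2))} :=
  qw_band_edges_general α β η h1 hα φf hlift
end
end
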